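/- Let G = (V,E) be a finite simple graph that is completely leaf-removable. Then the LP optimum of the vertex-cover linear-programming relaxation equals the minimum vertex cover number: LP(G) = τ(G). -/

import Mathlib

open Finset

variable {V : Type*} [Fintype V] [DecidableEq V]

/-- A fractional vertex cover of `G`. -/
def IsFracCover (G : SimpleGraph V) (x : V → ℝ) : Prop :=
  (∀ v, 0 ≤ x v ∧ x v ≤ 1) ∧ ∀ ⦃u v⦄, G.Adj u v → 1 ≤ x u + x v

/-- The optimum value of the LP relaxation of minimum vertex cover. -/
noncomputable def LPopt (G : SimpleGraph V) : ℝ :=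
  sInf {s : ℝ | ∃ x : V → ℝ, IsFracCover G x ∧ s = ∑ v, x v}

/-- `C` is a vertex cover of `G`. -/
def IsVC (G : SimpleGraph V) (C : Finset V) : Prop :=
  ∀ ⦃u v⦄, G.Adj u v → u ∈ C ∨ v ∈ C

/-- The vertex cover number `τ(G)`. -/
noncomputable def tau (G : SimpleGraph V) : ℕ :=
  sInf {n : ℕ | ∃ C : Finset V, IsVC G C ∧ C.card = n}

/-- `M` is a set of pairwise vertex-disjoint edges of `G`. -/
def IsMatchingSet (G : SimpleGraph V) (M : Finset (Sym2 V)) : Prop :=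
  (∀ e ∈ M, e ∈ G.edgeSet) ∧
  ∀ e ∈ M, ∀ f ∈ M, e ≠ f → ∀ v : V, ¬(v ∈ e ∧ v ∈ f)

/-- The matching number `ν(G)`. -/
noncomputable def nu (G : SimpleGraph V) : ℕ :=
  sSup {n : ℕ | ∃ M : Finset (Sym2 V), IsMatchingSet G M ∧ M.card = n}

/-- The graph obtained from `G` by deleting vertex `v` together with all
edges incident to `v` (the vertex set is kept, `v` becomes isolated). -/
def delVert {V : Type*} (G : SimpleGraph V) (v : V) : SimpleGraph V where
  Adj a b := G.Adj a b ∧ a ≠ v ∧ b ≠ v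
  symm := ⟨fun a b h => ⟨h.1.symm, h.2.2, h.2.1⟩⟩
  loopless := ⟨fun a h => G.loopless.irrefl a h.1⟩

/-- `G` is completely leaf-removable: either `G` has no edges, or there is a
vertex `w` of degree one with unique neighbour `v` such that deleting `v`
(and all edges incident to it) yields a completely leaf-removable graph. -/
inductive CompletelyLeafRemovable {V : Type*} : SimpleGraph V → Prop
  | empty (G : SimpleGraph V) (h : ∀ a b : V, ¬ G.Adj a b) : CompletelyLeafRemovable G
  | step (G : SimpleGraph V) (w v : V) (hadj : G.Adj w v)
      (huniq : ∀ u : V, G.Adj w u → u = v)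
      (h : CompletelyLeafRemovable (delVert G v)) : CompletelyLeafRemovable G

/-- A fractional matching of `G`, encoded as a function on `Sym2 V` vanishing
off the edge set of `G`. -/
def IsFracMatching (G : SimpleGraph V) (y : Sym2 V → ℝ) : Prop :=
  (∀ e ∈ G.edgeSet, 0 ≤ y e) ∧ (∀ e, e ∉ G.edgeSet → y e = 0) ∧
  ∀ v : V, ∑ e ∈ Finset.univ.filter (fun e : Sym2 V => v ∈ e), y e ≤ 1

/-- The value of a fractional matching. -/
noncomputable def FMvalue (y : Sym2 V → ℝ) : ℝ := ∑ e : Sym2 V, y e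

/-!
Every fractional cover `x` has value at least `τ(G)`, by induction along the leaf removals:
if `w` is a leaf with neighbour `v`, zeroing `x` at `w` and `v` leaves a fractional cover of
`G - v` (no edge of `G - v` meets `w`) whose value drops by `x w + x v ≥ 1`, while
`τ(G) ≤ τ(G - v) + 1`. Conversely the indicator of a minimum vertex cover is a fractional
cover of value `τ(G)`.
-/

section

variable {G : SimpleGraph V}

omit [Fintype V] [DecidableEq V] in
lemma IsVC.tau_le {C : Finset V} (hC : IsVC G C) : tau G ≤ C.card :=
  Nat.sInf_le ⟨C, hC, rfl⟩

omit [DecidableEq V] in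
lemma exists_isVC_card_eq_tau (G : SimpleGraph V) : ∃ C : Finset V, IsVC G C ∧ C.card = tau G :=
  Nat.sInf_mem (s := {n | ∃ C : Finset V, IsVC G C ∧ C.card = n})
    ⟨_, univ, fun u _ _ => Or.inl (mem_univ u), rfl⟩

omit [Fintype V] in
lemma IsVC.insert_delVert {v : V} {C : Finset V} (hC : IsVC (delVert G v) C) :
    IsVC G (insert v C) := by
  intro a b hab
  by_cases ha : a = v
  · exact Or.inl (ha ▸ mem_insert_self v C)
  by_cases hb : b = v
  · exact Or.inr (hb ▸ mem_insert_self v C)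
  exact (hC ⟨hab, ha, hb⟩).imp (mem_insert_of_mem ·) (mem_insert_of_mem ·)

lemma tau_le_tau_delVert_add_one (G : SimpleGraph V) (v : V) :
    tau G ≤ tau (delVert G v) + 1 := by
  obtain ⟨C, hC, hcard⟩ := exists_isVC_card_eq_tau (delVert G v)
  calc tau G ≤ (insert v C).card := hC.insert_delVert.tau_le
    _ ≤ C.card + 1 := card_insert_le v C
    _ = tau (delVert G v) + 1 := by rw [hcard]

omit [Fintype V] [DecidableEq V] in
lemma IsVC.isFracCover_indicator {C : Finset V} [DecidablePred (· ∈ C)] (hC : IsVC G C) :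
    IsFracCover G (fun u => if u ∈ C then 1 else 0) := by
  refine ⟨fun u => by dsimp only; split_ifs <;> norm_num, fun a b hab => ?_⟩
  rcases hC hab with h | h <;> simp only [h, if_true] <;> split_ifs <;> norm_num

omit [Fintype V] in
lemma IsFracCover.delVert_of_isLeaf {x : V → ℝ} (hx : IsFracCover G x) {w v : V}
    (hleaf : ∀ u, G.Adj w u → u = v) :
    IsFracCover (delVert G v) (fun u => if u ∈ ({w, v} : Finset V) then 0 else x u) := by
  refine ⟨fun u => by dsimp only; split_ifs; exacts [⟨le_rfl, zero_le_one⟩, hx.1 u], ?_⟩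
  rintro a b ⟨hab, ha, hb⟩
  have haw : a ≠ w := fun h => hb (hleaf b (h ▸ hab))
  have hbw : b ≠ w := fun h => ha (hleaf a (h ▸ hab.symm))
  simpa [ha, hb, haw, hbw] using hx.2 hab

lemma sum_ite_mem_pair_zero_add {M : Type*} [AddCommMonoid M] {w v : V} (hwv : w ≠ v)
    (x : V → M) :
    ∑ u, (if u ∈ ({w, v} : Finset V) then 0 else x u) + (x w + x v) = ∑ u, x u := by
  rw [← sum_add_sum_compl {w, v} x, ← sum_add_sum_compl {w, v},
    sum_eq_zero fun u hu => if_pos hu, sum_pair hwv, zero_add, add_comm]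
  exact congrArg _ (sum_congr rfl fun u hu => if_neg (mem_compl.mp hu))

lemma tau_le_sum_of_isFracCover (hG : CompletelyLeafRemovable G) {x : V → ℝ}
    (hx : IsFracCover G x) : (tau G : ℝ) ≤ ∑ u, x u := by
  induction hG generalizing x with
  | empty G hG =>
    have : tau G = 0 := Nat.le_zero.mp (IsVC.tau_le (C := ∅) fun u v huv => absurd huv (hG u v))
    rw [this, Nat.cast_zero]
    exact sum_nonneg fun u _ => (hx.1 u).1
  | step G w v hadj hleaf _ ih =>
    calc (tau G : ℝ) ≤ tau (delVert G v) + 1 := by exact_mod_cast tau_le_tau_delVert_add_one G v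
      _ ≤ ∑ u, (if u ∈ ({w, v} : Finset V) then 0 else x u) + (x w + x v) :=
        add_le_add (ih (hx.delVert_of_isLeaf hleaf)) (hx.2 hadj)
      _ = ∑ u, x u := sum_ite_mem_pair_zero_add hadj.ne x

end

/-- If `G` is completely leaf-removable then the LP optimum of the
vertex-cover LP relaxation equals the minimum vertex cover number. -/
theorem lp_eq_tau_of_completelyLeafRemovable (G : SimpleGraph V)
    (h : CompletelyLeafRemovable G) :
    LPopt G = (tau G : ℝ) := by
  obtain ⟨C, hC, hcard⟩ := exists_isVC_card_eq_tau G
  refine IsLeast.csInf_eq ⟨⟨_, hC.isFracCover_indicator, ?_⟩, ?_⟩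
  · rw [sum_boole, filter_mem_eq_inter, univ_inter, hcard]
  · rintro s ⟨x, hx, rfl⟩
    exact tau_le_sum_of_isFracCover h hx
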